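/- If u is a unitary element and p is a projection (self-adjoint idempotent) in a finite von Neumann algebra with faithful normal tracial state τ, then ‖up - pu‖₂ ≤ 1, where ‖x‖₂ = τ(x*x)^{1/2}. -/

import Mathlib

lemma aux_comm_trace {A : Type*} [Ring A] [StarRing A] [Algebra ℂ A]
    (τ : A →ₗ[ℂ] ℂ)
    (htrace : ∀ a b : A, τ (a * b) = τ (b * a))
    (u r : A) (hu1 : star u * u = 1) (hu2 : u * star u = 1)
    (hr1 : star r = r) (hr2 : r * r = r) :
    τ (star (u * r - r * u) * (u * r - r * u)) =
      2 * τ r - 2 * τ (star (r * u * r) * (r * u * r)) := by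
  have e1 : star (u * r - r * u) * (u * r - r * u) =
      r * (star u * u) * r - r * star u * r * u - star u * r * u * r
        + star u * (r * r) * u := by
    simp only [star_sub, star_mul, hr1]
    noncomm_ring
  rw [hu1, mul_one, hr2] at e1
  have h1 : τ (star u * r * u) = τ r := by
    have h := htrace (star u * r) u
    rwa [show u * (star u * r) = r by rw [← mul_assoc, hu2, one_mul]] at h
  have h2 : τ (star u * r * u * r) = τ (r * star u * r * u) := by
    have h := htrace (star u * r * u) r
    rwa [show r * (star u * r * u) = r * star u * r * u by noncomm_ring] at h
  have h3 : τ (star (r * u * r) * (r * u * r)) = τ (r * star u * r * u) := by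
    have e : star (r * u * r) * (r * u * r) = r * star u * r * u * r := by
      simp only [star_mul, hr1]
      calc r * (star u * r) * (r * u * r) = r * star u * (r * r) * u * r := by
            noncomm_ring
        _ = r * star u * r * u * r := by rw [hr2]
    rw [e]
    have h := htrace (r * star u * r * u) r
    rwa [show r * (r * star u * r * u) = r * star u * r * u by
      rw [show r * (r * star u * r * u) = (r * r) * star u * r * u by noncomm_ring, hr2]] at h
  rw [e1]
  simp only [map_sub, map_add, h1, h2, h3]
  ring

/-- If `u` is a unitary and `p` a projection in a ring with a faithful tracial
state `τ`, then `‖up - pu‖₂ ≤ 1` where `‖x‖₂ = (τ (x* x)).re.sqrt`. -/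
theorem stmt1 {A : Type*} [Ring A] [StarRing A] [Algebra ℂ A]
    (τ : A →ₗ[ℂ] ℂ) (hτ1 : τ 1 = 1)
    (htrace : ∀ a b : A, τ (a * b) = τ (b * a))
    (hstate : ∀ a : A, 0 ≤ (τ (star a * a)).re ∧ (τ (star a * a)).im = 0)
    (hfaithful : ∀ a : A, τ (star a * a) = 0 → a = 0)
    (u p : A) (hu1 : star u * u = 1) (hu2 : u * star u = 1)
    (hp1 : star p = p) (hp2 : p * p = p) :
    Real.sqrt ((τ (star (u * p - p * u) * (u * p - p * u))).re) ≤ 1 := by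
  set q : A := 1 - p with hq
  have hq1 : star q = q := by simp [hq, hp1]
  have hq2 : q * q = q := by
    simp only [hq, sub_mul, mul_sub, one_mul, mul_one, hp2]
    abel
  have hE1 := aux_comm_trace τ htrace u p hu1 hu2 hp1 hp2
  have hE2 := aux_comm_trace τ htrace u q hu1 hu2 hq1 hq2
  have hxq : star (u * q - q * u) * (u * q - q * u) =
      star (u * p - p * u) * (u * p - p * u) := by
    have : u * q - q * u = -(u * p - p * u) := by
      simp only [hq]; noncomm_ring
    rw [this, star_neg, neg_mul_neg]
  rw [hxq] at hE2
  have hpq : τ p + τ q = 1 := by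
    have : (p : A) + q = 1 := by simp [hq]
    calc τ p + τ q = τ (p + q) := (map_add τ p q).symm
      _ = 1 := by rw [this, hτ1]
  have hsum : 2 * τ (star (u * p - p * u) * (u * p - p * u)) =
      2 - 2 * τ (star (p * u * p) * (p * u * p))
        - 2 * τ (star (q * u * q) * (q * u * q)) := by
    have := congrArg₂ (· + ·) hE1 hE2
    have h1 : τ p + τ q = 1 := hpq
    linear_combination this + 2 * h1 - 2 * (1:ℂ) + 0
  have hre : (τ (star (u * p - p * u) * (u * p - p * u))).re =
      1 - (τ (star (p * u * p) * (p * u * p))).re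
        - (τ (star (q * u * q) * (q * u * q))).re := by
    have := congrArg Complex.re hsum
    simp only [Complex.sub_re, Complex.mul_re, Complex.re_ofNat, Complex.im_ofNat] at this
    linarith [this]
  have h1 := (hstate (p * u * p)).1
  have h2 := (hstate (q * u * q)).1
  have hle : (τ (star (u * p - p * u) * (u * p - p * u))).re ≤ 1 := by
    rw [hre]; linarith
  calc Real.sqrt _ ≤ Real.sqrt 1 := Real.sqrt_le_sqrt hle
    _ = 1 := Real.sqrt_one
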